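/- Let k satisfy ⌊n/2⌋ ≤ k ≤ n−1, let ψ : {1,…,n} → ℂ and let P be the homogeneous operator of degree k associated to ψ. Then P is a Rota–Baxter operator of weight 0, i.e. P(x)·P(y) = P(x·P(y) + P(x)·y) for all x, y ∈ A, if and only if ψ(i) = 0 for all n−k+1 ≤ i ≤ n (the values ψ(i) for 1 ≤ i ≤ n−k being arbitrary). -/
import Mathlib


open Finset

/-- Coordinate space of the `n`-dimensional complex null-filiform associative algebra,
with respect to the basis `e_1, …, e_n` (coordinate `m : Fin n` corresponds to `e_{m+1}`). -/
abbrev NF (n : ℕ) : Type := Fin n → ℂ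

/-- Multiplication of the null-filiform algebra: `e_i · e_j = e_{i+j}` if `i + j ≤ n`
and `e_i · e_j = 0` if `i + j > n`, extended bilinearly. -/
noncomputable def nfMul {n : ℕ} (x y : NF n) : NF n :=
  fun m => ∑ i : Fin n, ∑ j : Fin n,
    if (i : ℕ) + (j : ℕ) + 1 = (m : ℕ) then x i * y j else 0

/-- The basis element `e_k`, for `1 ≤ k ≤ n` (it is `0` if `k = 0` or `k > n`). -/
noncomputable def nfE (n k : ℕ) : NF n := fun m => if (m : ℕ) + 1 = k then 1 else 0

/-- The `k`-th power (for `k ≥ 1`) of an element of the null-filiform algebra. -/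
noncomputable def nfPow {n : ℕ} (x : NF n) : ℕ → NF n
  | 0 => 0
  | 1 => x
  | k + 2 => nfMul (nfPow x (k + 1)) x

lemma nfE_zero {n a : ℕ} (h : n < a) : nfE n a = 0 := by
  funext m
  have := m.isLt
  simp only [nfE, Pi.zero_apply]
  rw [if_neg (by omega)]

lemma nfMul_smul_left {n : ℕ} (c : ℂ) (x y : NF n) :
    nfMul (c • x) y = c • nfMul x y := by
  funext m
  simp only [nfMul, Pi.smul_apply, smul_eq_mul, Finset.mul_sum]
  refine Finset.sum_congr rfl fun i _ => Finset.sum_congr rfl fun j _ => ?_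
  split_ifs <;> ring

lemma nfMul_smul_right {n : ℕ} (c : ℂ) (x y : NF n) :
    nfMul x (c • y) = c • nfMul x y := by
  funext m
  simp only [nfMul, Pi.smul_apply, smul_eq_mul, Finset.mul_sum]
  refine Finset.sum_congr rfl fun i _ => Finset.sum_congr rfl fun j _ => ?_
  split_ifs <;> ring

lemma nfE_mul {n a b : ℕ} (ha : 1 ≤ a) (hb : 1 ≤ b) :
    nfMul (nfE n a) (nfE n b) = nfE n (a + b) := by
  funext m
  have hmn := m.isLt
  simp only [nfMul, nfE]
  by_cases hm : (m : ℕ) + 1 = a + b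
  · rw [if_pos hm]
    have han : a - 1 < n := by omega
    have hbn : b - 1 < n := by omega
    have key : ∀ i j : Fin n,
        (if (i : ℕ) + (j : ℕ) + 1 = (m : ℕ) then
          (if (i : ℕ) + 1 = a then (1:ℂ) else 0) * (if (j : ℕ) + 1 = b then 1 else 0) else 0)
        = if ((i : ℕ) = a - 1 ∧ (j : ℕ) = b - 1) then 1 else 0 := by
      intro i j
      have hi := i.isLt
      have hj := j.isLt
      split_ifs <;> first | (exfalso; omega) | norm_num
    simp only [key]
    rw [Finset.sum_eq_single (⟨a - 1, han⟩ : Fin n)]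
    · rw [Finset.sum_eq_single (⟨b - 1, hbn⟩ : Fin n)]
      · simp
      · intro j _ hj
        rw [if_neg]
        rintro ⟨-, h2⟩
        exact hj (Fin.ext h2)
      · intro h; exact absurd (Finset.mem_univ _) h
    · intro i _ hi
      refine Finset.sum_eq_zero fun j _ => ?_
      rw [if_neg]
      rintro ⟨h1, -⟩
      exact hi (Fin.ext h1)
    · intro h; exact absurd (Finset.mem_univ _) h
  · rw [if_neg hm]
    refine Finset.sum_eq_zero fun i _ => Finset.sum_eq_zero fun j _ => ?_
    split_ifs <;> first | (exfalso; omega) | norm_num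

lemma nf_eq_sum {n : ℕ} (x : NF n) : x = ∑ i : Fin n, x i • nfE n ((i : ℕ) + 1) := by
  funext m
  rw [Finset.sum_apply, Finset.sum_eq_single m]
  · simp [nfE]
  · intro i _ hi
    have hne : (i : ℕ) ≠ (m : ℕ) := fun h => hi (Fin.ext h)
    simp only [Pi.smul_apply, nfE, smul_eq_mul]
    rw [if_neg (by omega), mul_zero]
  · intro h; exact absurd (Finset.mem_univ _) h

section Aux

variable {n k : ℕ} {ψ : ℕ → ℂ} {P : NF n →ₗ[ℂ] NF n}

lemma P_eval (hP : ∀ i, 1 ≤ i → i ≤ n →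
      P (nfE n i) = ψ i • nfE n (if i + k ≤ n then i + k else i + k - n)) (x : NF n) :
    P x = ∑ i : Fin n, x i •
      (ψ ((i : ℕ) + 1) • nfE n (if (i : ℕ) + 1 + k ≤ n then (i : ℕ) + 1 + k else (i : ℕ) + 1 + k - n)) := by
  conv_lhs => rw [nf_eq_sum x]
  rw [map_sum]
  refine Finset.sum_congr rfl fun i _ => ?_
  rw [map_smul, hP ((i : ℕ) + 1) (by omega) (by have := i.isLt; omega)]

lemma P_low (hP : ∀ i, 1 ≤ i → i ≤ n →
      P (nfE n i) = ψ i • nfE n (if i + k ≤ n then i + k else i + k - n))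
    (hψ : ∀ i, n - k + 1 ≤ i → i ≤ n → ψ i = 0)
    (x : NF n) (p : Fin n) (hp : (p : ℕ) < k) : P x p = 0 := by
  rw [P_eval hP, Finset.sum_apply]
  refine Finset.sum_eq_zero fun i _ => ?_
  have hin := i.isLt
  by_cases h : (i : ℕ) + 1 + k ≤ n
  · simp only [Pi.smul_apply, smul_eq_mul, nfE, if_pos h]
    rw [if_neg (by omega), mul_zero, mul_zero]
  · rw [hψ ((i : ℕ) + 1) (by omega) (by omega), zero_smul, smul_zero, Pi.zero_apply]

lemma P_high_zero (hP : ∀ i, 1 ≤ i → i ≤ n →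
      P (nfE n i) = ψ i • nfE n (if i + k ≤ n then i + k else i + k - n))
    (hψ : ∀ i, n - k + 1 ≤ i → i ≤ n → ψ i = 0) (h2k : n ≤ 2 * k + 1)
    (z : NF n) (hz : ∀ p : Fin n, (p : ℕ) ≤ k → z p = 0) : P z = 0 := by
  rw [P_eval hP]
  refine Finset.sum_eq_zero fun i _ => ?_
  have hin := i.isLt
  by_cases hi : (i : ℕ) ≤ k
  · rw [hz i hi, zero_smul]
  · rw [hψ ((i : ℕ) + 1) (by omega) (by omega), zero_smul, smul_zero]

end Aux

/-- For `⌊n/2⌋ ≤ k ≤ n−1`, the homogeneous operator of degree `k` associated to `ψ`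
is a Rota–Baxter operator of weight `0` iff `ψ(i) = 0` for all `n−k+1 ≤ i ≤ n`. -/
theorem rota_baxter_weight0_large_degree (n k : ℕ) (hk1 : n / 2 ≤ k) (hk2 : k ≤ n - 1)
    (ψ : ℕ → ℂ) (P : NF n →ₗ[ℂ] NF n)
    (hP : ∀ i, 1 ≤ i → i ≤ n →
      P (nfE n i) = ψ i • nfE n (if i + k ≤ n then i + k else i + k - n)) :
    (∀ x y : NF n,
      nfMul (P x) (P y) = P (nfMul x (P y) + nfMul (P x) y)) ↔
      (∀ i, n - k + 1 ≤ i → i ≤ n → ψ i = 0) := by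
  constructor
  · intro hRB i hi1 hi2
    have hn : 1 ≤ n := by omega
    have hk0 : 1 ≤ k := by omega
    have hkn : k ≤ n - 1 := hk2
    have hx := hP i (by omega) hi2
    rw [if_neg (by omega)] at hx
    have hy := hP (n - k) (by omega) (by omega)
    rw [if_pos (by omega)] at hy
    have hnk : n - k + k = n := by omega
    rw [hnk] at hy
    have heq := hRB (nfE n i) (nfE n (n - k))
    rw [hx, hy, nfMul_smul_left, nfMul_smul_right,
      nfE_mul (by omega) (by omega), nfE_zero (by omega), smul_zero, smul_zero,
      nfMul_smul_right, nfMul_smul_left,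
      nfE_mul (by omega) (by omega), nfE_mul (by omega) (by omega),
      nfE_zero (by omega), smul_zero, zero_add] at heq
    have hik : i + k - n + (n - k) = i := by omega
    rw [hik, map_smul, hx] at heq
    have hcoord : i + k - n - 1 < n := by omega
    have h0 := congrFun heq (⟨i + k - n - 1, hcoord⟩ : Fin n)
    simp only [Pi.zero_apply, Pi.smul_apply, smul_eq_mul, nfE] at h0
    rw [if_pos (by omega)] at h0
    have : ψ i * ψ i = 0 := by linear_combination -h0
    exact mul_self_eq_zero.mp this
  · intro hψ x y
    have h2k : n ≤ 2 * k + 1 := by omega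
    have hz : ∀ p : Fin n, (p : ℕ) ≤ k → (nfMul x (P y) + nfMul (P x) y) p = 0 := by
      intro p hp
      have h1 : nfMul x (P y) p = 0 := by
        refine Finset.sum_eq_zero fun i _ => Finset.sum_eq_zero fun j _ => ?_
        by_cases hc : (i : ℕ) + (j : ℕ) + 1 = (p : ℕ)
        · rw [if_pos hc, P_low hP hψ y j (by omega), mul_zero]
        · rw [if_neg hc]
      have h2 : nfMul (P x) y p = 0 := by
        refine Finset.sum_eq_zero fun i _ => Finset.sum_eq_zero fun j _ => ?_
        by_cases hc : (i : ℕ) + (j : ℕ) + 1 = (p : ℕ)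
        · rw [if_pos hc, P_low hP hψ x i (by omega), zero_mul]
        · rw [if_neg hc]
      rw [Pi.add_apply, h1, h2, add_zero]
    rw [P_high_zero hP hψ h2k _ hz]
    funext m
    have hmn := m.isLt
    rw [Pi.zero_apply]
    refine Finset.sum_eq_zero fun i _ => Finset.sum_eq_zero fun j _ => ?_
    by_cases hc : (i : ℕ) + (j : ℕ) + 1 = (m : ℕ)
    · rcases (by omega : (i : ℕ) < k ∨ (j : ℕ) < k) with h | h
      · rw [if_pos hc, P_low hP hψ x i h, zero_mul]
      · rw [if_pos hc, P_low hP hψ y j h, mul_zero]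
    · rw [if_neg hc]
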